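/- Let F^{[1]},…,F^{[N]} : ℝ^D → ℝ^D be Lipschitz continuous maps of class C³, fix y^n ∈ ℝ^D, and consider an s-stage NSARK step with coefficient functions a_{ij}^{[ν]}(h), b_j^{[ν]}(h) satisfying a_{ij}^{[ν]}(h) = O(1) and b_j^{[ν]}(h) = O(1) as h → 0⁺, such that for each h in some interval (0,h₀] the stage equations possess a solution. If, as h → 0⁺, Σ_{j=1}^s b_j^{[ν]}(h) = 1 + O(h²) for every ν, and Σ_{i,j=1}^s b_i^{[μ]}(h) a_{ij}^{[ν]}(h) = 1/2 + O(h) for every μ, ν, then for every function u : ℝ → ℝ^D with u(0) = y^n and u'(t) = Σ_{ν=1}^N F^{[ν]}(u(t)) for all t, one has ‖y^{n+1}(h) − u(h)‖ = O(h³) as h → 0⁺; that is, the NSARK method is of order at least 2. -/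

import Mathlib

open Topology Asymptotics Filter Finset

/-!
The exact solution and the NSARK step are both expanded to second order about `y₀`.
Writing `G = ∑ ν, F ν`, the flow satisfies
`u h = y₀ + h G(y₀) + h²/2 G'(y₀) G(y₀) + O(h³)`: integrating `u' = G ∘ u` twice, each time
feeding the previous estimate into the Taylor remainder of `G`.
For the method, Lipschitz continuity gives `‖Y - y₀‖ ≤ h c(h) (1 + ‖Y - y₀‖)` in the sup norm
over the stages, with `c` bounded; absorbing the right-hand side for small `h` shows that every
stage is `O(h)`-close to `y₀`, hence
`Y j = y₀ + h ∑ₖ ∑_μ a_{jk}^{[μ]} F μ y₀ + O(h²)`. Inserting this into the Taylor expansion of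
`F ν (Y j)` writes the increment as
`∑_ν (∑ⱼ b_j^{[ν]}) F ν y₀ + h ∑_{ν,μ} (∑_{j,k} b_j^{[ν]} a_{jk}^{[μ]}) F ν'(y₀) F μ y₀ + O(h²)`,
and the two order conditions turn this into the expansion of the flow.
-/

section Calculus

variable {E E' : Type*} [NormedAddCommGroup E] [NormedSpace ℝ E]
  [NormedAddCommGroup E'] [NormedSpace ℝ E']

theorem ContDiffAt.isBigO_sub_sub_fderiv {F : E → E'} {x : E} (hF : ContDiffAt ℝ 2 F x) :
    (fun y => F y - F x - fderiv ℝ F x (y - x)) =O[𝓝 x] fun y => ‖y - x‖ ^ 2 := by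
  obtain ⟨K, t, ht, hlip⟩ := (hF.fderiv_right (m := 1) le_rfl).exists_lipschitzOnWith
  have hdiff : ∀ᶠ y in 𝓝 x, DifferentiableAt ℝ F y :=
    (hF.eventually (by simp)).mono fun y hy => hy.differentiableAt (by norm_num)
  obtain ⟨ε, εpos, hball⟩ := Metric.mem_nhds_iff.1 (inter_mem ht hdiff)
  refine IsBigO.of_bound K ?_
  filter_upwards [Metric.ball_mem_nhds x εpos] with y hy
  have hsub : Metric.closedBall x ‖y - x‖ ⊆ t ∩ {y | DifferentiableAt ℝ F y} :=
    (Metric.closedBall_subset_ball (by rwa [← dist_eq_norm, ← Metric.mem_ball])).trans hball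
  have hx : x ∈ Metric.closedBall x ‖y - x‖ := Metric.mem_closedBall_self (norm_nonneg _)
  have hbound : ∀ z ∈ Metric.closedBall x ‖y - x‖,
      ‖fderiv ℝ F z - fderiv ℝ F x‖ ≤ K * ‖y - x‖ := fun z hz => by
    rw [← dist_eq_norm, ← dist_eq_norm]
    exact hlip.dist_le_mul z (hsub hz).1 x (hsub hx).1 |>.trans
      (mul_le_mul_of_nonneg_left (by simpa [dist_eq_norm] using hz) K.2)
  calc ‖F y - F x - fderiv ℝ F x (y - x)‖ ≤ K * ‖y - x‖ * ‖y - x‖ :=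
        (convex_closedBall x _).norm_image_sub_le_of_norm_fderiv_le' (fun z hz => (hsub hz).2)
          hbound hx (by simp [dist_eq_norm])
    _ = K * ‖‖y - x‖ ^ 2‖ := by rw [norm_pow, norm_norm]; ring

theorem isBigO_pow_succ_of_hasDerivAt {f f' : ℝ → E} {k : ℕ} (h0 : f 0 = 0)
    (hf : ∀ t, HasDerivAt f (f' t) t) (hf' : f' =O[𝓝[≥] 0] fun t => t ^ k) :
    f =O[𝓝[≥] 0] fun t => t ^ (k + 1) := by
  obtain ⟨c, hc0, hc⟩ := hf'.exists_pos
  obtain ⟨δ, hδ, hδc⟩ := mem_nhdsGE_iff_exists_Ico_subset.1 hc.bound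
  refine IsBigO.of_bound c ?_
  filter_upwards [Ico_mem_nhdsGE hδ] with h hh
  have hderiv : ∀ t ∈ Set.Ico 0 h, ‖f' t‖ ≤ c * h ^ k := fun t ht => by
    have hct : ‖f' t‖ ≤ c * ‖t ^ k‖ := hδc ⟨ht.1, ht.2.trans hh.2⟩
    rw [norm_pow, Real.norm_of_nonneg ht.1] at hct
    exact hct.trans (by gcongr; exacts [ht.1, ht.2.le])
  have := norm_image_sub_le_of_norm_deriv_le_segment'
    (fun t _ => (hf t).hasDerivWithinAt) hderiv h ⟨hh.1, le_rfl⟩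
  rw [h0, sub_zero, sub_zero] at this
  rw [norm_pow, Real.norm_of_nonneg hh.1]
  exact this.trans_eq (by ring)

theorem isBigO_ode_solution_sub_taylor {G : E → E} {u : ℝ → E}
    (hG : ContDiffAt ℝ 2 G (u 0)) (hu : ∀ t, HasDerivAt u (G (u t)) t) :
    (fun h => u h - (u 0 + h • G (u 0) + (h ^ 2 / 2) • fderiv ℝ G (u 0) (G (u 0))))
      =O[𝓝[≥] 0] fun h => h ^ 3 := by
  set G₀ := G (u 0)
  set DG := fderiv ℝ G (u 0)
  have hu_tendsto : Tendsto u (𝓝[≥] 0) (𝓝 (u 0)) :=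
    (hu 0).continuousAt.tendsto.mono_left nhdsWithin_le_nhds
  have first_order : (fun t => u t - u 0) =O[𝓝[≥] 0] fun t => t := by
    simpa using ((hu 0).hasFDerivAt.isBigO_sub).mono nhdsWithin_le_nhds
  have second_order : (fun t => u t - (u 0 + t • G₀)) =O[𝓝[≥] 0] fun t => t ^ 2 := by
    have hderiv (t : ℝ) : HasDerivAt (fun t => u t - (u 0 + t • G₀)) (G (u t) - G₀) t := by
      simpa using (hu t).fun_sub ((hasDerivAt_const t (u 0)).fun_add
        ((hasDerivAt_id t).smul_const G₀))
    refine isBigO_pow_succ_of_hasDerivAt (by simp) hderiv ?_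
    exact ((hG.differentiableAt (by norm_num)).hasFDerivAt.isBigO_sub.comp_tendsto
      hu_tendsto).trans (by simpa [Function.comp_def] using first_order)
  refine isBigO_pow_succ_of_hasDerivAt (k := 2)
    (f' := fun t => (G (u t) - G₀ - DG (u t - u 0)) + DG (u t - (u 0 + t • G₀))) (by simp)
    (fun t => ?_) ?_
  · convert (hu t).fun_sub (((hasDerivAt_const t (u 0)).fun_add
      ((hasDerivAt_id t).smul_const G₀)).fun_add
        (((hasDerivAt_pow 2 t).div_const 2).smul_const (DG G₀))) using 1
    · rfl
    · simp only [map_sub, map_add, map_smul]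
      norm_num
      abel
  · refine IsBigO.add ?_ ?_
    · exact (hG.isBigO_sub_sub_fderiv.comp_tendsto hu_tendsto).trans (first_order.norm_left.pow 2)
    · exact (DG.isBigO_comp _ _).trans second_order

end Calculus

namespace Asymptotics

variable {E : Type*} [NormedAddCommGroup E] [NormedSpace ℝ E] {ι : Type*} [Fintype ι]

theorem IsBigO.fun_sum_smul {α : Type*} {l : Filter α} {c : ι → α → ℝ}
    {f : ι → α → E} {g : α → ℝ} (hc : ∀ i, c i =O[l] fun _ => (1 : ℝ))
    (hf : ∀ i, f i =O[l] g) : (fun x => ∑ i, c i x • f i x) =O[l] g :=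
  IsBigO.fun_sum fun i _ => by simpa using (hc i).smul (hf i)

theorem IsBigO.smul_const {α : Type*} {l : Filter α} {c g : α → ℝ}
    (hc : c =O[l] g) (v : E) : (fun x => c x • v) =O[l] g :=
  (IsBigO.of_bound ‖v‖ (Eventually.of_forall fun x => by rw [norm_smul, mul_comm])).trans hc

theorem IsBigO.id_smul {l : Filter ℝ} {f : ℝ → E} {g : ℝ → ℝ} (hf : f =O[l] g) :
    (fun h => h • f h) =O[l] fun h => h * g h := by
  simpa using (isBigO_refl (fun h : ℝ => h) l).smul hf

end Asymptotics

theorem isBigO_of_norm_le_mul_one_add {E : Type*} [NormedAddCommGroup E] {x : ℝ → E} {c : ℝ → ℝ}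
    (hc : c =O[𝓝[>] 0] fun _ => (1 : ℝ))
    (hx : ∀ᶠ h in 𝓝[>] 0, ‖x h‖ ≤ h * c h * (1 + ‖x h‖)) : x =O[𝓝[>] 0] fun h => h := by
  have hsmall : (fun h => h * c h) =O[𝓝[>] 0] fun h => h := by simpa using hc.id_smul
  have htend : Tendsto (fun h => h * c h) (𝓝[>] 0) (𝓝 0) :=
    hsmall.trans_tendsto (tendsto_nhdsWithin_of_tendsto_nhds tendsto_id)
  refine IsBigO.trans (IsBigO.of_bound 2 ?_) hsmall
  filter_upwards [hx, htend.eventually (ge_mem_nhds one_half_pos)] with h hxh hhalf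
  rw [Real.norm_eq_abs]
  -- `‖x‖ ≤ a (1 + ‖x‖)` with `a ≤ 1/2` gives `‖x‖ ≤ 2 a`
  nlinarith [le_abs_self (h * c h), norm_nonneg (x h)]

namespace NSARK

variable {E : Type*} [NormedAddCommGroup E] [NormedSpace ℝ E] {ι κ : Type*} [Fintype ι] [Fintype κ]

theorem increment_eq_expansion (F : κ → E → E) (D : κ → E →L[ℝ] E) (y₀ : E) (h : ℝ)
    (a : ι → ι → κ → ℝ) (b : ι → κ → ℝ) (Y : ι → E) :
    ∑ j, ∑ ν, b j ν • F ν (Y j) =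
      ∑ ν, (∑ j, b j ν) • F ν y₀
      + h • ∑ ν, ∑ μ, (∑ j, ∑ k, b j ν * a j k μ) • D ν (F μ y₀)
      + ∑ j, ∑ ν, b j ν • (D ν (Y j - y₀ - h • ∑ k, ∑ μ, a j k μ • F μ y₀)
          + (F ν (Y j) - F ν y₀ - D ν (Y j - y₀))) := by
  have split : ∀ j ν, F ν (Y j) = F ν y₀ + h • D ν (∑ k, ∑ μ, a j k μ • F μ y₀)
      + (D ν (Y j - y₀ - h • ∑ k, ∑ μ, a j k μ • F μ y₀)
        + (F ν (Y j) - F ν y₀ - D ν (Y j - y₀))) := by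
    intro j ν
    simp only [map_sub, map_smul]
    abel
  have hweights : ∑ j, ∑ ν, b j ν • F ν y₀ = ∑ ν, (∑ j, b j ν) • F ν y₀ := by
    rw [Finset.sum_comm]
    simp only [Finset.sum_smul]
  have hcoupling : ∑ j, ∑ ν, b j ν • h • D ν (∑ k, ∑ μ, a j k μ • F μ y₀) =
      h • ∑ ν, ∑ μ, (∑ j, ∑ k, b j ν * a j k μ) • D ν (F μ y₀) := by
    simp only [map_sum, map_smul, Finset.smul_sum, Finset.sum_smul, smul_smul]
    rw [Finset.sum_comm]
    refine Finset.sum_congr rfl fun ν _ => ?_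
    rw [eq_comm, Finset.sum_comm]
    refine Finset.sum_congr rfl fun j _ => ?_
    rw [Finset.sum_comm]
    exact Finset.sum_congr rfl fun k _ => Finset.sum_congr rfl fun μ _ => by ring_nf
  rw [Finset.sum_congr rfl fun j _ =>
    Finset.sum_congr rfl fun ν _ => congrArg (b j ν • ·) (split j ν)]
  simp only [smul_add, Finset.sum_add_distrib, hweights, hcoupling]

variable {F : κ → E → E} {y₀ : E} {A : ℝ → ι → ι → κ → ℝ} {Y : ℝ → ι → E}

theorem stage_sub_isBigO (hF : ∀ ν, ∃ K, LipschitzWith K (F ν))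
    (hA : ∀ i j ν, (fun h => A h i j ν) =O[𝓝[>] 0] fun _ => (1 : ℝ))
    (hY : ∀ᶠ h in 𝓝[>] 0, ∀ i, Y h i = y₀ + h • ∑ j, ∑ ν, A h i j ν • F ν (Y h j)) (i : ι) :
    (fun h => Y h i - y₀) =O[𝓝[>] 0] fun h => h := by
  choose K hK using hF
  set c₀ := ∑ _j : ι, ∑ ν, (‖F ν y₀‖ + K ν)
  have hAbdd : (fun h => A h) =O[𝓝[>] 0] fun _ => (1 : ℝ) :=
    isBigO_pi.2 fun i => isBigO_pi.2 fun j => isBigO_pi.2 fun ν => hA i j ν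
  suffices (fun h j => Y h j - y₀) =O[𝓝[>] 0] fun h => h from isBigO_pi.1 this i
  refine isBigO_of_norm_le_mul_one_add (c := fun h => ‖A h‖ * c₀)
    (by simpa using hAbdd.norm_left.mul (isBigO_const_const c₀ one_ne_zero _)) ?_
  filter_upwards [hY, self_mem_nhdsWithin] with h hYh (hpos : 0 < h)
  set e := fun j => Y h j - y₀
  refine (pi_norm_le_iff_of_nonneg (by positivity)).2 fun i => ?_
  have hterm : ∀ j ν, ‖A h i j ν • F ν (Y h j)‖ ≤ ‖A h‖ * ((‖F ν y₀‖ + K ν) * (1 + ‖e‖)) := by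
    intro j ν
    have hAij : ‖A h i j ν‖ ≤ ‖A h‖ := (norm_le_pi_norm (A h i j) ν).trans
      ((norm_le_pi_norm (A h i) j).trans (norm_le_pi_norm (A h) i))
    have hFj : ‖F ν (Y h j)‖ ≤ ‖F ν y₀‖ + K ν * ‖e‖ := by
      calc ‖F ν (Y h j)‖ ≤ ‖F ν y₀‖ + ‖F ν (Y h j) - F ν y₀‖ := norm_le_insert' _ _
        _ ≤ ‖F ν y₀‖ + K ν * ‖e j‖ := by gcongr; exact (hK ν).norm_sub_le _ _
        _ ≤ ‖F ν y₀‖ + K ν * ‖e‖ := by gcongr; exact norm_le_pi_norm e j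
    rw [norm_smul]
    gcongr
    nlinarith [norm_nonneg (F ν y₀), norm_nonneg e, (K ν).2]
  calc ‖e i‖ = h * ‖∑ j, ∑ ν, A h i j ν • F ν (Y h j)‖ := by
        rw [show e i = h • _ from sub_eq_of_eq_add' (hYh i), norm_smul, Real.norm_of_nonneg hpos.le]
    _ ≤ h * ∑ j, ∑ ν, ‖A h‖ * ((‖F ν y₀‖ + K ν) * (1 + ‖e‖)) := by
        gcongr
        exact (norm_sum_le _ _).trans (sum_le_sum fun j _ => (norm_sum_le _ _).trans
          (sum_le_sum fun ν _ => hterm j ν))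
    _ = h * (‖A h‖ * c₀) * (1 + ‖e‖) := by
        simp only [c₀, Finset.mul_sum, Finset.sum_mul]
        exact sum_congr rfl fun j _ => sum_congr rfl fun ν _ => by ring

theorem stage_defect_isBigO (hF : ∀ ν, ∃ K, LipschitzWith K (F ν))
    (hA : ∀ i j ν, (fun h => A h i j ν) =O[𝓝[>] 0] fun _ => (1 : ℝ))
    (hY : ∀ᶠ h in 𝓝[>] 0, ∀ i, Y h i = y₀ + h • ∑ j, ∑ ν, A h i j ν • F ν (Y h j)) (i : ι) :
    (fun h => Y h i - y₀ - h • ∑ j, ∑ ν, A h i j ν • F ν y₀) =O[𝓝[>] 0] fun h => h ^ 2 := by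
  have hFY : ∀ j ν, (fun h => F ν (Y h j) - F ν y₀) =O[𝓝[>] 0] fun h => h := fun j ν => by
    obtain ⟨K, hK⟩ := hF ν
    exact (IsBigO.of_bound K (Eventually.of_forall fun h => hK.norm_sub_le _ _)).trans
      (stage_sub_isBigO hF hA hY j)
  have hsum : (fun h => ∑ j, ∑ ν, A h i j ν • (F ν (Y h j) - F ν y₀)) =O[𝓝[>] 0] fun h => h :=
    IsBigO.fun_sum fun j _ => IsBigO.fun_sum_smul (hA i j) (hFY j)
  refine hsum.id_smul.congr' ?_ (Eventually.of_forall fun h => (sq h).symm)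
  filter_upwards [hY] with h hYh
  rw [hYh i]
  simp only [smul_sub, Finset.sum_sub_distrib]
  abel

theorem increment_sub_isBigO {B : ℝ → ι → κ → ℝ} (hF : ∀ ν, ∃ K, LipschitzWith K (F ν))
    (hF₂ : ∀ ν, ContDiffAt ℝ 2 (F ν) y₀)
    (hA : ∀ i j ν, (fun h => A h i j ν) =O[𝓝[>] 0] fun _ => (1 : ℝ))
    (hB : ∀ j ν, (fun h => B h j ν) =O[𝓝[>] 0] fun _ => (1 : ℝ))
    (hY : ∀ᶠ h in 𝓝[>] 0, ∀ i, Y h i = y₀ + h • ∑ j, ∑ ν, A h i j ν • F ν (Y h j))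
    (hcond1 : ∀ ν, (fun h => (∑ j, B h j ν) - 1) =O[𝓝[>] 0] fun h => h ^ 2)
    (hcond2 : ∀ μ ν, (fun h => (∑ i, ∑ j, B h i μ * A h i j ν) - 1 / 2) =O[𝓝[>] 0] fun h => h) :
    (fun h => ∑ j, ∑ ν, B h j ν • F ν (Y h j) - ∑ ν, F ν y₀
      - (h / 2) • ∑ ν, fderiv ℝ (F ν) y₀ (∑ μ, F μ y₀)) =O[𝓝[>] 0] fun h => h ^ 2 := by
  set D := fun ν => fderiv ℝ (F ν) y₀
  have hYlim : ∀ j, Tendsto (fun h => Y h j) (𝓝[>] 0) (𝓝 y₀) := fun j =>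
    tendsto_sub_nhds_zero_iff.1 ((stage_sub_isBigO hF hA hY j).trans_tendsto
      (tendsto_nhdsWithin_of_tendsto_nhds tendsto_id))
  have hR : ∀ j ν, (fun h => F ν (Y h j) - F ν y₀ - D ν (Y h j - y₀)) =O[𝓝[>] 0]
      fun h => h ^ 2 := fun j ν =>
    ((hF₂ ν).isBigO_sub_sub_fderiv.comp_tendsto (hYlim j)).trans
      ((stage_sub_isBigO hF hA hY j).norm_left.pow 2)
  have hdefect : ∀ j ν, (fun h => D ν (Y h j - y₀ - h • ∑ k, ∑ μ, A h j k μ • F μ y₀))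
      =O[𝓝[>] 0] fun h => h ^ 2 := fun j ν =>
    ((D ν).isBigO_comp _ _).trans (stage_defect_isBigO hF hA hY j)
  have hweights : (fun h => ∑ ν, ((∑ j, B h j ν) - 1) • F ν y₀) =O[𝓝[>] 0] fun h => h ^ 2 :=
    IsBigO.fun_sum fun ν _ => (hcond1 ν).smul_const (F ν y₀)
  have hcoupling : (fun h => h • ∑ ν, ∑ μ, ((∑ j, ∑ k, B h j ν * A h j k μ) - 1 / 2) •
      D ν (F μ y₀)) =O[𝓝[>] 0] fun h => h ^ 2 := by
    have hsum : (fun h => ∑ ν, ∑ μ, ((∑ j, ∑ k, B h j ν * A h j k μ) - 1 / 2) •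
        D ν (F μ y₀)) =O[𝓝[>] 0] fun h => h :=
      IsBigO.fun_sum fun ν _ => IsBigO.fun_sum fun μ _ => (hcond2 ν μ).smul_const (D ν (F μ y₀))
    simpa [sq] using hsum.id_smul
  have hlocal : (fun h => ∑ j, ∑ ν, B h j ν • (D ν (Y h j - y₀ - h • ∑ k, ∑ μ, A h j k μ • F μ y₀)
      + (F ν (Y h j) - F ν y₀ - D ν (Y h j - y₀)))) =O[𝓝[>] 0] fun h => h ^ 2 :=
    IsBigO.fun_sum fun j _ => IsBigO.fun_sum_smul (hB j) fun ν => (hdefect j ν).add (hR j ν)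
  refine ((hweights.add hcoupling).add hlocal).congr_left fun h => ?_
  rw [increment_eq_expansion F D y₀ h (A h) (B h) (Y h)]
  simp only [D, sub_smul, one_smul, Finset.sum_sub_distrib, smul_sub, map_sum, Finset.smul_sum,
    smul_smul, mul_one_div]
  abel

end NSARK

/-- Second-order sufficiency for NSARK methods (Corollary 2.2 of
Izgin–Ketcheson–Meister, p = 2, sufficiency direction): if
Σ_j b_j^{[ν]}(h) = 1 + O(h²) for all ν and
Σ_{i,j} b_i^{[μ]}(h) a_{ij}^{[ν]}(h) = 1/2 + O(h) for all μ, ν, then the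
NSARK method is of order at least 2. -/
theorem stmt19 (D N s : ℕ)
    (F : Fin N → (Fin D → ℝ) → (Fin D → ℝ))
    (hFL : ∀ ν, ∃ K, LipschitzWith K (F ν))
    (hFC : ∀ ν, ContDiff ℝ 3 (F ν))
    (yn : Fin D → ℝ)
    (A : ℝ → Fin s → Fin s → Fin N → ℝ) (B : ℝ → Fin s → Fin N → ℝ)
    (hA : ∀ i j ν, (fun h => A h i j ν) =O[𝓝[>] (0 : ℝ)] fun _ => (1 : ℝ))
    (hB : ∀ j ν, (fun h => B h j ν) =O[𝓝[>] (0 : ℝ)] fun _ => (1 : ℝ))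
    (Y : ℝ → Fin s → (Fin D → ℝ)) (ynext : ℝ → (Fin D → ℝ))
    (hstep : ∃ h₀ > (0 : ℝ), ∀ h ∈ Set.Ioc (0 : ℝ) h₀,
      (∀ i, Y h i = yn + h • ∑ j, ∑ ν, A h i j ν • F ν (Y h j)) ∧
      ynext h = yn + h • ∑ j, ∑ ν, B h j ν • F ν (Y h j))
    (hcond1 : ∀ ν, (fun h => (∑ j, B h j ν) - 1)
      =O[𝓝[>] (0 : ℝ)] fun h => h ^ 2)
    (hcond2 : ∀ μ ν, (fun h => (∑ i, ∑ j, B h i μ * A h i j ν) - 1 / 2)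
      =O[𝓝[>] (0 : ℝ)] fun h => h) :
    ∀ u : ℝ → (Fin D → ℝ), u 0 = yn →
      (∀ t, HasDerivAt u (∑ ν, F ν (u t)) t) →
      (fun h => ynext h - u h) =O[𝓝[>] (0 : ℝ)] fun h => h ^ 3 := by
  intro u hu0 hu
  obtain ⟨h₀, h₀pos, hstep⟩ := hstep
  have hstep' : ∀ᶠ h in 𝓝[>] (0 : ℝ), (∀ i, Y h i = yn + h • ∑ j, ∑ ν, A h i j ν • F ν (Y h j))
      ∧ ynext h = yn + h • ∑ j, ∑ ν, B h j ν • F ν (Y h j) :=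
    mem_of_superset (Ioc_mem_nhdsGT h₀pos) hstep
  have hF₂ : ∀ ν, ContDiffAt ℝ 2 (F ν) yn := fun ν => (hFC ν).contDiffAt.of_le (by norm_num)
  have hmethod := (NSARK.increment_sub_isBigO hFL hF₂ hA hB (hstep'.mono fun _ => And.left) hcond1
    hcond2).id_smul
  have hexact := isBigO_ode_solution_sub_taylor (G := fun y => ∑ ν, F ν y)
    (hu0 ▸ ContDiffAt.sum fun ν _ => hF₂ ν) hu
  rw [hu0, fderiv_fun_sum fun ν _ => (hF₂ ν).differentiableAt (by norm_num),
    _root_.sum_apply] at hexact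
  refine ((hmethod.congr_right fun h => by ring).sub
    (hexact.mono (nhdsWithin_mono _ Set.Ioi_subset_Ici_self))).congr' ?_ EventuallyEq.rfl
  filter_upwards [hstep'] with h hh
  rw [hh.2]
  module
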